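/- Sum-of-squares criterion for degree-4 subharmonicity implies coefficient constraints: if the degree-4 homogeneous polynomial p = A_1 x_1^4 + A_2(x_1^3 x_2 + x_2 x_1^3) + A_3(x_1^2 x_2 x_1 + x_1 x_2 x_1^2) + A_4(x_1^2 x_2^2 + x_2^2 x_1^2) + A_5(x_1 x_2 x_1 x_2 + x_2 x_1 x_2 x_1) + A_6 x_1 x_2^2 x_1 + A_7(x_1 x_2^3 + x_2^3 x_1) + A_8 x_2 x_1^2 x_2 + A_9(x_2 x_1 x_2^2 + x_2^2 x_1 x_2) + A_{10} x_2^4 has matrix-positive Laplacian, then A_4 = −A_1, A_{10} = A_1, A_9 = −A_2, and A_7 = −A_3. -/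

import Mathlib

noncomputable section

/-- Variables: `some i` is `xᵢ`, `none` is the direction variable `h`. -/
abbrev Var (g : ℕ) := Option (Fin g)

/-- Noncommutative polynomials `ℝ⟨x₁,…,x_g,h⟩`. -/
abbrev NC (g : ℕ) := MonoidAlgebra ℝ (FreeMonoid (Var g))

/-- The monomial corresponding to a word. -/
def mono (g : ℕ) (w : List (Var g)) : NC g :=
  MonoidAlgebra.of ℝ (FreeMonoid (Var g)) (FreeMonoid.ofList w)

/-- The generator `xᵢ`. -/
def Xv (g : ℕ) (i : Fin g) : NC g := mono g [some i]

/-- The direction variable `h`. -/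
def Hv (g : ℕ) : NC g := mono g [none]

/-- Directional derivative of a word in `xᵢ` in direction `h`: sum of the
terms obtained by replacing one occurrence of `xᵢ` by `h`. -/
def wordD (g : ℕ) (i : Fin g) : List (Var g) → NC g
  | [] => 0
  | a :: w =>
      (if a = some i then mono g (none :: w) else 0) + mono g [a] * wordD g i w

/-- Directional derivative `D[p, xᵢ, h]`, extended linearly from words. -/
def D (g : ℕ) (i : Fin g) (p : NC g) : NC g :=
  Finsupp.sum p.coeff fun w c => c • wordD g i (FreeMonoid.toList w)

/-- The noncommutative Laplacian `Lap[p,h] := ∑ᵢ D[D[p,xᵢ,h],xᵢ,h]`. -/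
def Lap (g : ℕ) (p : NC g) : NC g := ∑ i : Fin g, D g i (D g i p)

/-- The transpose: linear anti-automorphism reversing words and fixing generators. -/
def transp (g : ℕ) (p : NC g) : NC g :=
  MonoidAlgebra.ofCoeff (Finsupp.mapDomain (fun w => FreeMonoid.ofList (FreeMonoid.toList w).reverse) p.coeff)

/-- Evaluation of a polynomial at a tuple of matrices (one for each variable). -/
def eval (g n : ℕ) (M : Var g → Matrix (Fin n) (Fin n) ℝ) (p : NC g) :
    Matrix (Fin n) (Fin n) ℝ :=
  Finsupp.sum p.coeff fun w c => c • ((FreeMonoid.toList w).map M).prod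

/-- `p` is a polynomial in `x₁,…,x_g` only (the variable `h` does not occur). -/
def NoH (g : ℕ) (p : NC g) : Prop :=
  ∀ w ∈ p.coeff.support, none ∉ FreeMonoid.toList w

/-- `p` is a homogeneous polynomial of degree `d` in the variables `x₁,…,x_g`. -/
def HomogX (g : ℕ) (d : ℕ) (p : NC g) : Prop :=
  ∀ w ∈ p.coeff.support, none ∉ FreeMonoid.toList w ∧ (FreeMonoid.toList w).length = d

/-!
`Lap p` is quadratic in `h` and of degree two in `x₁, x₂`. Evaluate it at the adjacency matrices of
the labelled path `0 —xₐ— 1 —x_b— 2 —h— 3 —h— 4`, so that the `(i, j)` entry of a word counts the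
walks from `i` to `j` along edges carrying its letters. A closed walk of length four at `0` never
reaches an `h`-edge, so the `(0, 0)` entry of `Lap p` vanishes, and by the Zeroes Lemma so does its
whole row. But the `(0, 4)` entry sees only the walk along the path, i.e. it is the coefficient of
`xₐ x_b h²` in `Lap p`; for the four choices of `a, b` these are `2 (A₁ + A₄)`, `2 (A₃ + A₇)`,
`2 (A₂ + A₉)` and `2 (A₄ + A₁₀)`.
-/

open scoped ComplexOrder in
theorem Matrix.PosSemidef.apply_eq_zero_of_diag_eq_zero {n 𝕜 : Type*} [Fintype n] [DecidableEq n]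
    [RCLike 𝕜] {A : Matrix n n 𝕜} (hA : A.PosSemidef) {i : n} (hi : A i i = 0) (j : n) :
    A i j = 0 := by
  have hcol : A.mulVec (Pi.single i 1) = 0 :=
    (hA.dotProduct_mulVec_zero_iff _).1 (by simp [hi])
  have hji : A j i = 0 := by simpa using congrFun hcol j
  rw [← hA.isHermitian.apply, hji, star_zero]

section Calculus

variable {g : ℕ}

lemma mono_mul (w w' : List (Var g)) : mono g w * mono g w' = mono g (w ++ w') := by
  simp [mono]

lemma D_add (i : Fin g) (p q : NC g) : D g i (p + q) = D g i p + D g i q := by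
  classical
  unfold D
  rw [MonoidAlgebra.coeff_add]
  apply Finsupp.sum_add_index <;> intros <;> simp [add_smul]

lemma D_smul (i : Fin g) (c : ℝ) (p : NC g) : D g i (c • p) = c • D g i p := by
  unfold D
  rw [MonoidAlgebra.coeff_smul, Finsupp.sum_smul_index (by intros; simp), Finsupp.smul_sum]
  simp [mul_smul]

lemma D_zero (i : Fin g) : D g i (0 : NC g) = 0 := by
  simp [D]

lemma D_mono (i : Fin g) (w : List (Var g)) : D g i (mono g w) = wordD g i w := by
  unfold D mono
  rw [MonoidAlgebra.of_apply, MonoidAlgebra.coeff_single, Finsupp.sum_single_index (by simp)]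
  simp [FreeMonoid.toList_ofList]

variable {n : ℕ} (M : Var g → Matrix (Fin n) (Fin n) ℝ)

lemma eval_add (p q : NC g) : eval g n M (p + q) = eval g n M p + eval g n M q := by
  classical
  unfold eval
  rw [MonoidAlgebra.coeff_add]
  apply Finsupp.sum_add_index <;> intros <;> simp [add_smul]

lemma eval_smul (c : ℝ) (p : NC g) : eval g n M (c • p) = c • eval g n M p := by
  unfold eval
  rw [MonoidAlgebra.coeff_smul, Finsupp.sum_smul_index (by intros; simp), Finsupp.smul_sum]
  simp [mul_smul]

lemma eval_mono (w : List (Var g)) : eval g n M (mono g w) = (w.map M).prod := by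
  unfold eval mono
  rw [MonoidAlgebra.of_apply, MonoidAlgebra.coeff_single, Finsupp.sum_single_index (by simp)]
  simp [FreeMonoid.toList_ofList]

end Calculus

def pathTuple {g m : ℕ} (w : Fin m → Var g) (v : Var g) : Matrix (Fin (m + 1)) (Fin (m + 1)) ℝ :=
  ∑ k with w k = v, (Matrix.single k.castSucc k.succ 1 + Matrix.single k.succ k.castSucc 1)

lemma pathTuple_isSymm {g m : ℕ} (w : Fin m → Var g) (v : Var g) : (pathTuple w v).IsSymm := by
  simp [pathTuple, Matrix.IsSymm, Matrix.transpose_sum, Matrix.transpose_single, add_comm]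

section Quartic

variable (A₁ A₂ A₃ A₄ A₅ A₆ A₇ A₈ A₉ A₁₀ : ℝ)

def quartic : NC 2 :=
  let x₁ := Xv 2 0
  let x₂ := Xv 2 1
  A₁ • (x₁ ^ 4)
    + A₂ • (x₁ ^ 3 * x₂ + x₂ * x₁ ^ 3)
    + A₃ • (x₁ ^ 2 * x₂ * x₁ + x₁ * x₂ * x₁ ^ 2)
    + A₄ • (x₁ ^ 2 * x₂ ^ 2 + x₂ ^ 2 * x₁ ^ 2)
    + A₅ • (x₁ * x₂ * x₁ * x₂ + x₂ * x₁ * x₂ * x₁)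
    + A₆ • (x₁ * x₂ ^ 2 * x₁)
    + A₇ • (x₁ * x₂ ^ 3 + x₂ ^ 3 * x₁)
    + A₈ • (x₂ * x₁ ^ 2 * x₂)
    + A₉ • (x₂ * x₁ * x₂ ^ 2 + x₂ ^ 2 * x₁ * x₂)
    + A₁₀ • (x₂ ^ 4)

lemma lap_quartic : Lap 2 (quartic A₁ A₂ A₃ A₄ A₅ A₆ A₇ A₈ A₉ A₁₀) =
    (2 * (A₁ + A₄)) • (mono 2 [some 0, some 0, none, none] + mono 2 [none, none, some 0, some 0])
    + (2 * (A₃ + A₇)) • (mono 2 [some 0, some 1, none, none] + mono 2 [none, none, some 1, some 0]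
        + mono 2 [some 0, none, some 1, none] + mono 2 [none, some 1, none, some 0])
    + (2 * (A₂ + A₉)) • (mono 2 [some 1, some 0, none, none] + mono 2 [none, none, some 0, some 1]
        + mono 2 [some 1, none, some 0, none] + mono 2 [none, some 0, none, some 1])
    + (2 * (A₄ + A₁₀)) • (mono 2 [some 1, some 1, none, none] + mono 2 [none, none, some 1, some 1])
    + (2 * (A₁ + A₅)) • (mono 2 [some 0, none, some 0, none] + mono 2 [none, some 0, none, some 0])
    + (2 * (A₅ + A₁₀)) • (mono 2 [some 1, none, some 1, none] + mono 2 [none, some 1, none, some 1])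
    + (2 * (A₂ + A₇)) • (mono 2 [some 0, none, none, some 1] + mono 2 [some 1, none, none, some 0])
    + (2 * (A₃ + A₉)) • (mono 2 [none, some 0, some 1, none] + mono 2 [none, some 1, some 0, none])
    + (2 * (A₁ + A₆)) • mono 2 [some 0, none, none, some 0]
    + (2 * (A₈ + A₁₀)) • mono 2 [some 1, none, none, some 1]
    + (2 * (A₁ + A₈)) • mono 2 [none, some 0, some 0, none]
    + (2 * (A₆ + A₁₀)) • mono 2 [none, some 1, some 1, none] := by
  simp only [quartic, Xv, pow_succ, pow_zero, one_mul, mono_mul, List.cons_append,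
    List.nil_append, Lap, Fin.sum_univ_two, D_add, D_smul, D_mono]
  simp only [wordD, mono_mul, mul_add, mul_zero, add_zero, List.cons_append, List.nil_append,
    reduceCtorEq, Option.some.injEq, ite_false, ite_true, D_add, D_mono, D_zero, one_ne_zero,
    zero_ne_one]
  module

lemma eval_pathTuple_lap_quartic_zero_zero (a b : Fin 2) :
    eval 2 5 (pathTuple ![some a, some b, none, none])
      (Lap 2 (quartic A₁ A₂ A₃ A₄ A₅ A₆ A₇ A₈ A₉ A₁₀)) 0 0 = 0 := by
  simp only [lap_quartic, eval_add, eval_smul, eval_mono, List.map_cons, List.map_nil,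
    List.prod_cons, List.prod_nil, mul_one, Matrix.add_apply, Matrix.smul_apply, Matrix.mul_apply,
    pathTuple]
  fin_cases a <;> fin_cases b <;> simp [Matrix.single_apply, Finset.sum_filter, Fin.sum_univ_four]

lemma eval_pathTuple_lap_quartic_zero_four :
    let E (a b : Fin 2) := eval 2 5 (pathTuple ![some a, some b, none, none])
      (Lap 2 (quartic A₁ A₂ A₃ A₄ A₅ A₆ A₇ A₈ A₉ A₁₀)) 0 4
    E 0 0 = 2 * (A₁ + A₄) ∧ E 0 1 = 2 * (A₃ + A₇) ∧ E 1 0 = 2 * (A₂ + A₉) ∧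
      E 1 1 = 2 * (A₄ + A₁₀) := by
  simp only [lap_quartic, eval_add, eval_smul, eval_mono, List.map_cons, List.map_nil,
    List.prod_cons, List.prod_nil, mul_one, Matrix.add_apply, Matrix.smul_apply, Matrix.mul_apply,
    pathTuple]
  refine ⟨?_, ?_, ?_, ?_⟩ <;>
    simp [Matrix.single_apply, Finset.sum_filter, Fin.sum_univ_four, Fin.sum_univ_five]

end Quartic

/-- matrix positivity of the Laplacian of a general homogeneous
degree-4 polynomial forces the coefficient constraints
`A₄ = -A₁`, `A₁₀ = A₁`, `A₉ = -A₂`, `A₇ = -A₃`. -/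
theorem deg4_coefficient_constraints
    (A₁ A₂ A₃ A₄ A₅ A₆ A₇ A₈ A₉ A₁₀ : ℝ) (p : NC 2)
    (x₁ x₂ : NC 2) (hx₁ : x₁ = Xv 2 0) (hx₂ : x₂ = Xv 2 1)
    (hp : p = A₁ • (x₁ ^ 4)
        + A₂ • (x₁ ^ 3 * x₂ + x₂ * x₁ ^ 3)
        + A₃ • (x₁ ^ 2 * x₂ * x₁ + x₁ * x₂ * x₁ ^ 2)
        + A₄ • (x₁ ^ 2 * x₂ ^ 2 + x₂ ^ 2 * x₁ ^ 2)
        + A₅ • (x₁ * x₂ * x₁ * x₂ + x₂ * x₁ * x₂ * x₁)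
        + A₆ • (x₁ * x₂ ^ 2 * x₁)
        + A₇ • (x₁ * x₂ ^ 3 + x₂ ^ 3 * x₁)
        + A₈ • (x₂ * x₁ ^ 2 * x₂)
        + A₉ • (x₂ * x₁ * x₂ ^ 2 + x₂ ^ 2 * x₁ * x₂)
        + A₁₀ • (x₂ ^ 4))
    (hpos : ∀ (n : ℕ) (M : Var 2 → Matrix (Fin n) (Fin n) ℝ),
      (∀ v, (M v).IsSymm) → (eval 2 n M (Lap 2 p)).PosSemidef) :
    A₄ = -A₁ ∧ A₁₀ = A₁ ∧ A₉ = -A₂ ∧ A₇ = -A₃ := by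
  obtain rfl : p = quartic A₁ A₂ A₃ A₄ A₅ A₆ A₇ A₈ A₉ A₁₀ := by
    subst hx₁ hx₂
    exact hp
  have hrow (a b : Fin 2) :=
    (hpos 5 _ (pathTuple_isSymm _)).apply_eq_zero_of_diag_eq_zero
      (eval_pathTuple_lap_quartic_zero_zero A₁ A₂ A₃ A₄ A₅ A₆ A₇ A₈ A₉ A₁₀ a b) 4
  obtain ⟨h₀₀, h₀₁, h₁₀, h₁₁⟩ :=
    eval_pathTuple_lap_quartic_zero_four A₁ A₂ A₃ A₄ A₅ A₆ A₇ A₈ A₉ A₁₀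
  simp only [hrow] at h₀₀ h₀₁ h₁₀ h₁₁
  refine ⟨by linarith, by linarith, by linarith, by linarith⟩
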